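/- arXiv:2512.07579 — 4 statements merged into one kernel-verified Lean document; each statement's English description precedes it below -/
import Mathlib

section
/- Let P(λ) = λ^5 + (5 - n)λ^4 + (9 - 3n - t)λ^3 + (nt - n - t^2 - 2t - 1)λ^2 + (2nt + 4n - 2t^2 - 2t - 16)λ + 4n - 12 with real parameters n ≥ 9 and 3 ≤ t ≤ n - 3. Then P is strictly increasing on the interval [n - 3, ∞). -/
/-!
In the coordinates `a = x - (n - 3)`, `b = n - 3 - t`, `c = t - 3`, all nonnegative, the derivative
`P'(x)` is a polynomial in `a, b, c` whose coefficients are all nonnegative except for the constant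
term `-31`. Since `b + c = n - 6 ≥ 3`, the two terms `41 b + 18 c²` already exceed `31`, so `P' > 0`
on `[n - 3, ∞)`.
-/

def quintic (n t x : ℝ) : ℝ :=
  x ^ 5 + (5 - n) * x ^ 4 + (9 - 3 * n - t) * x ^ 3 + (n * t - n - t ^ 2 - 2 * t - 1) * x ^ 2
    + (2 * n * t + 4 * n - 2 * t ^ 2 - 2 * t - 16) * x + 4 * n - 12

def quinticDeriv (n t x : ℝ) : ℝ :=
  5 * x ^ 4 + 4 * (5 - n) * x ^ 3 + 3 * (9 - 3 * n - t) * x ^ 2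
    + 2 * (n * t - n - t ^ 2 - 2 * t - 1) * x + (2 * n * t + 4 * n - 2 * t ^ 2 - 2 * t - 16)

theorem hasDerivAt_quintic (n t x : ℝ) : HasDerivAt (quintic n t) (quinticDeriv n t x) x := by
  have h := (((((hasDerivAt_pow 5 x).add ((hasDerivAt_pow 4 x).const_mul (5 - n))).add
    ((hasDerivAt_pow 3 x).const_mul (9 - 3 * n - t))).add
    ((hasDerivAt_pow 2 x).const_mul (n * t - n - t ^ 2 - 2 * t - 1))).add
    ((hasDerivAt_id' x).const_mul (2 * n * t + 4 * n - 2 * t ^ 2 - 2 * t - 16))).add_const (4 * n)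
    |>.sub_const 12
  refine h.congr_deriv ?_
  norm_num [quinticDeriv]
  ring

theorem quinticDeriv_shift_pos {a b c : ℝ} (ha : 0 ≤ a) (hb : 0 ≤ b) (hc : 0 ≤ c)
    (hbc : 3 ≤ b + c) : 0 < quinticDeriv (6 + b + c) (3 + c) (3 + a + b + c) := by
  have hconst : 0 < 41 * b + 18 * c ^ 2 - 31 := by nlinarith [sq_nonneg (c - 41 / 36)]
  have hexpand : quinticDeriv (6 + b + c) (3 + c) (3 + a + b + c) =
      (41 * b + 18 * c ^ 2 - 31)
      + (66 * b * c + 40 * b ^ 2 + 8 * c ^ 3 + 29 * b * c ^ 2 + 32 * b ^ 2 * c + 11 * b ^ 3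
        + (b + c) ^ 4)
      + a * (208 + 238 * b + 216 * c + 78 * b ^ 2 + 152 * b * c + 72 * c ^ 2 + 8 * (b + c) ^ 3
        + (198 + 123 * b + 120 * c + 18 * (b + c) ^ 2) * a + (56 + 16 * (b + c)) * a ^ 2
        + 5 * a ^ 3) := by
    unfold quinticDeriv
    ring
  rw [hexpand]
  exact add_pos_of_pos_of_nonneg (add_pos_of_pos_of_nonneg hconst (by positivity)) (by positivity)

theorem quinticDeriv_pos {n t x : ℝ} (hn : 9 ≤ n) (ht : 3 ≤ t) (htn : t ≤ n - 3) (hx : n - 3 ≤ x) :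
    0 < quinticDeriv n t x := by
  obtain ⟨c, hc, rfl⟩ : ∃ c, 0 ≤ c ∧ t = 3 + c := ⟨t - 3, by linarith, by ring⟩
  obtain ⟨b, hb, rfl⟩ : ∃ b, 0 ≤ b ∧ n = 6 + b + c := ⟨n - 6 - c, by linarith, by ring⟩
  obtain ⟨a, ha, rfl⟩ : ∃ a, 0 ≤ a ∧ x = 3 + a + b + c := ⟨x - 3 - b - c, by linarith, by ring⟩
  exact quinticDeriv_shift_pos ha hb hc (by linarith)

theorem stmt_3 (n t : ℝ) (hn : 9 ≤ n) (ht : 3 ≤ t) (htn : t ≤ n - 3) :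
    StrictMonoOn
      (fun x : ℝ => x ^ 5 + (5 - n) * x ^ 4 + (9 - 3 * n - t) * x ^ 3
        + (n * t - n - t ^ 2 - 2 * t - 1) * x ^ 2
        + (2 * n * t + 4 * n - 2 * t ^ 2 - 2 * t - 16) * x + 4 * n - 12)
      (Set.Ici (n - 3)) := by
  show StrictMonoOn (quintic n t) (Set.Ici (n - 3))
  have hderiv := hasDerivAt_quintic n t
  refine strictMonoOn_of_hasDerivWithinAt_pos (convex_Ici _)
    (fun x _ => (hderiv x).continuousAt.continuousWithinAt)
    (fun x _ => (hderiv x).hasDerivWithinAt) fun x hx => ?_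
  rw [interior_Ici] at hx
  exact quinticDeriv_pos hn ht htn hx.le
end

section
/- For integers n ≥ 4 and 3 ≤ t ≤ n, the largest real root λ₁ of g_{n,t}(λ) = λ^3 - (n-3)λ^2 - (n+t-3)λ - t^2 + (n+4)t - n - 7 satisfies n - 2 ≤ λ₁ < n - 1, with equality n - 2 = λ₁ if and only if t = 3. -/
/-!
Dividing by `λ - (n - 2)` gives
`g_{n,t}(λ) = (λ - (n - 2)) (λ² + λ + 1 - t) - (t - 3)²`.
Hence `g_{n,t}(n - 2) = -(t - 3)² ≤ 0`, while for `λ ≥ n - 1` the product is at least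
`(n - 1)² > (t - 3)²`, so `g_{n,t}` has a root in `[n - 2, n - 1)` and none beyond `n - 1`.
If `λ₁ = n - 2` then `g_{n,t}(n - 2) = 0`, i.e. `t = 3`; conversely
`g_{n,3}(λ) = (λ - (n - 2)) (λ - 1) (λ + 2)` has largest root `n - 2`.
-/

namespace CubicG

def g (n t x : ℝ) : ℝ :=
  x ^ 3 - (n - 3) * x ^ 2 - (n + t - 3) * x - t ^ 2 + (n + 4) * t - n - 7

variable {n t x : ℝ}

theorem g_eq (n t x : ℝ) : g n t x = (x - (n - 2)) * (x ^ 2 + x + 1 - t) - (t - 3) ^ 2 := by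
  unfold g; ring

theorem g_sub_two (n t : ℝ) : g n t (n - 2) = -(t - 3) ^ 2 := by
  rw [g_eq]; ring

theorem g_pos_of_sub_one_le (ht : 3 ≤ t) (htn : t ≤ n) (hx : n - 1 ≤ x) : 0 < g n t x := by
  have hfactor : (n - 1) ^ 2 ≤ (x - (n - 2)) * (x ^ 2 + x + 1 - t) := by
    have hquad : (n - 1) ^ 2 ≤ x ^ 2 + x + 1 - t := by nlinarith
    nlinarith
  have hsq : (t - 3) ^ 2 < (n - 1) ^ 2 := by nlinarith
  rw [g_eq]; linarith

theorem exists_root_mem_Icc (ht : 3 ≤ t) (htn : t ≤ n) :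
    ∃ x ∈ Set.Icc (n - 2) (n - 1), g n t x = 0 := by
  have hcont : Continuous (g n t) := by unfold g; fun_prop
  have hzero : (0 : ℝ) ∈ Set.Icc (g n t (n - 2)) (g n t (n - 1)) := by
    rw [g_sub_two]
    exact ⟨by nlinarith, (g_pos_of_sub_one_le ht htn le_rfl).le⟩
  exact intermediate_value_Icc (by linarith) hcont.continuousOn hzero

theorem g_three_eq (n x : ℝ) : g n 3 x = (x - (n - 2)) * (x - 1) * (x + 2) := by
  rw [g_eq]; ring

theorem g_three_pos (hn : 3 ≤ n) (hx : n - 2 < x) : 0 < g n 3 x := by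
  rw [g_three_eq]
  have h1 : 0 < x - 1 := by linarith
  have h2 : 0 < x + 2 := by linarith
  positivity

end CubicG

open CubicG in
theorem stmt_11_general (n t : ℤ) (ht : 3 ≤ t) (htn : t ≤ n) (l1 : ℝ)
    (hroot : l1 ^ 3 - ((n : ℝ) - 3) * l1 ^ 2 - ((n : ℝ) + t - 3) * l1 - (t : ℝ) ^ 2
        + ((n : ℝ) + 4) * t - n - 7 = 0)
    (hmax : ∀ x : ℝ, x ^ 3 - ((n : ℝ) - 3) * x ^ 2 - ((n : ℝ) + t - 3) * x - (t : ℝ) ^ 2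
        + ((n : ℝ) + 4) * t - n - 7 = 0 → x ≤ l1) :
    (n : ℝ) - 2 ≤ l1 ∧ l1 < (n : ℝ) - 1 ∧ ((n : ℝ) - 2 = l1 ↔ t = 3) := by
  have htr : (3 : ℝ) ≤ t := by exact_mod_cast ht
  have htnr : (t : ℝ) ≤ n := by exact_mod_cast htn
  change g n t l1 = 0 at hroot
  change ∀ x, g n t x = 0 → x ≤ l1 at hmax
  obtain ⟨c, hc, hgc⟩ := exists_root_mem_Icc htr htnr
  have hle : (n : ℝ) - 2 ≤ l1 := hc.1.trans (hmax c hgc)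
  refine ⟨hle, lt_of_not_ge fun h => (g_pos_of_sub_one_le htr htnr h).ne' hroot, ?_, ?_⟩
  · rintro rfl
    rw [g_sub_two, neg_eq_zero, sq_eq_zero_iff, sub_eq_zero] at hroot
    exact_mod_cast hroot
  · rintro rfl
    refine hle.eq_of_not_lt fun hgt => (g_three_pos (by linarith) hgt).ne' ?_
    exact_mod_cast hroot

theorem stmt_11 (n t : ℤ) (hn : 4 ≤ n) (ht : 3 ≤ t) (htn : t ≤ n) (l1 : ℝ)
    (hroot : l1 ^ 3 - ((n : ℝ) - 3) * l1 ^ 2 - ((n : ℝ) + t - 3) * l1 - (t : ℝ) ^ 2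
        + ((n : ℝ) + 4) * t - n - 7 = 0)
    (hmax : ∀ x : ℝ, x ^ 3 - ((n : ℝ) - 3) * x ^ 2 - ((n : ℝ) + t - 3) * x - (t : ℝ) ^ 2
        + ((n : ℝ) + 4) * t - n - 7 = 0 → x ≤ l1) :
    (n : ℝ) - 2 ≤ l1 ∧ l1 < (n : ℝ) - 1 ∧ ((n : ℝ) - 2 = l1 ↔ t = 3) :=
  stmt_11_general n t ht htn l1 hroot hmax
end

section
/- For integers n ≥ 6 and 3 ≤ s < t ≤ n, the largest real root of g_{n,s} is strictly less than the largest real root of g_{n,t}, where g_{n,t}(λ) = λ^3 - (n-3)λ^2 - (n+t-3)λ - t^2 + (n+4)t - n - 7; equivalently, λ_max is strictly increasing in t on 3 ≤ t ≤ n. -/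
/-!
Write `g t` for the cubic with parameter `t`. Since `g t (n - 2) = -(t - 3)² ≤ 0` and `g t` is
positive on `[n, ∞)`, the largest root `λₛ` of `g s` lies in `[n - 2, n)`. The difference
`g t - g s = (t - s)(n + 4 - t - s - λ)` is negative at `λ ≥ n - 2` once `t + s > 6`, so
`g t (λₛ) < 0 < g t n`, and `g t` has a root strictly between `λₛ` and `n`.
-/

open Set

namespace LambdaMaxCubic

def cubic (n t x : ℝ) : ℝ :=
  x ^ 3 - (n - 3) * x ^ 2 - (n + t - 3) * x - t ^ 2 + (n + 4) * t - n - 7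

variable {n s t x : ℝ}

theorem continuous_cubic (n t : ℝ) : Continuous (cubic n t) := by
  unfold cubic
  fun_prop

theorem cubic_sub_cubic (n s t x : ℝ) :
    cubic n t x - cubic n s x = (t - s) * (n + 4 - t - s - x) := by
  unfold cubic
  ring

theorem cubic_sub_two (n t : ℝ) : cubic n t (n - 2) = -(t - 3) ^ 2 := by
  unfold cubic
  ring

theorem cubic_pos_of_le (ht : 3 ≤ t) (htn : t ≤ n) (hx : n ≤ x) : 0 < cubic n t x := by
  have hcube : 3 * x ^ 2 ≤ x ^ 2 * (x - n + 3) := by nlinarith [sq_nonneg x]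
  have hquad : n * (n + 3) ≤ x * (3 * x - 2 * n + 3) := by nlinarith
  have hlin : 12 ≤ t * (n + 4 - t) := by nlinarith
  unfold cubic
  nlinarith

theorem lt_of_cubic_eq_zero (ht : 3 ≤ t) (htn : t ≤ n) (hx : cubic n t x = 0) : x < n :=
  lt_of_not_ge fun h => (cubic_pos_of_le ht htn h).ne' hx

theorem exists_cubic_eq_zero_mem_Icc (ht : 3 ≤ t) (htn : t ≤ n) :
    ∃ x ∈ Icc (n - 2) n, cubic n t x = 0 := by
  have hmem : (0 : ℝ) ∈ Icc (cubic n t (n - 2)) (cubic n t n) :=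
    ⟨by rw [cubic_sub_two]; nlinarith, (cubic_pos_of_le ht htn le_rfl).le⟩
  exact intermediate_value_Icc (by linarith) (continuous_cubic n t).continuousOn hmem

theorem sub_two_le_of_mem_upperBounds {l : ℝ} (ht : 3 ≤ t) (htn : t ≤ n)
    (hl : l ∈ upperBounds {x | cubic n t x = 0}) : n - 2 ≤ l := by
  obtain ⟨x, hx, hroot⟩ := exists_cubic_eq_zero_mem_Icc ht htn
  exact hx.1.trans (hl hroot)

theorem lt_of_isGreatest_of_mem_upperBounds {ls lt : ℝ} (hs : 3 ≤ s) (hst : s < t)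
    (htn : t ≤ n) (hls : IsGreatest {x | cubic n s x = 0} ls)
    (hlt : lt ∈ upperBounds {x | cubic n t x = 0}) : ls < lt := by
  have hsn : s ≤ n := hst.le.trans htn
  have hls_lower : n - 2 ≤ ls := sub_two_le_of_mem_upperBounds hs hsn hls.2
  have hls_upper : ls < n := lt_of_cubic_eq_zero hs hsn hls.1
  have hneg : cubic n t ls < 0 := by
    have hdiff := cubic_sub_cubic n s t ls
    rw [hls.1, sub_zero] at hdiff
    rw [hdiff]
    exact mul_neg_of_pos_of_neg (by linarith) (by linarith)
  have hpos : 0 < cubic n t n := cubic_pos_of_le (by linarith) htn le_rfl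
  obtain ⟨c, hc, hroot⟩ := intermediate_value_Ioo hls_upper.le
    (continuous_cubic n t).continuousOn ⟨hneg, hpos⟩
  exact hc.1.trans_le (hlt hroot)

end LambdaMaxCubic

theorem stmt_16_general (n s t : ℤ) (hs : 3 ≤ s) (hst : s < t) (htn : t ≤ n)
    (ls lt : ℝ)
    (hs_root : ls ^ 3 - ((n : ℝ) - 3) * ls ^ 2 - ((n : ℝ) + s - 3) * ls - (s : ℝ) ^ 2
        + ((n : ℝ) + 4) * s - n - 7 = 0)
    (hs_max : ∀ x : ℝ, x ^ 3 - ((n : ℝ) - 3) * x ^ 2 - ((n : ℝ) + s - 3) * x - (s : ℝ) ^ 2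
        + ((n : ℝ) + 4) * s - n - 7 = 0 → x ≤ ls)
    (ht_max : ∀ x : ℝ, x ^ 3 - ((n : ℝ) - 3) * x ^ 2 - ((n : ℝ) + t - 3) * x - (t : ℝ) ^ 2
        + ((n : ℝ) + 4) * t - n - 7 = 0 → x ≤ lt) :
    ls < lt :=
  LambdaMaxCubic.lt_of_isGreatest_of_mem_upperBounds (n := n) (by exact_mod_cast hs)
    (by exact_mod_cast hst) (by exact_mod_cast htn) ⟨hs_root, hs_max⟩ ht_max

theorem stmt_16 (n s t : ℤ) (hn : 6 ≤ n) (hs : 3 ≤ s) (hst : s < t) (htn : t ≤ n)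
    (ls lt : ℝ)
    (hs_root : ls ^ 3 - ((n : ℝ) - 3) * ls ^ 2 - ((n : ℝ) + s - 3) * ls - (s : ℝ) ^ 2
        + ((n : ℝ) + 4) * s - n - 7 = 0)
    (hs_max : ∀ x : ℝ, x ^ 3 - ((n : ℝ) - 3) * x ^ 2 - ((n : ℝ) + s - 3) * x - (s : ℝ) ^ 2
        + ((n : ℝ) + 4) * s - n - 7 = 0 → x ≤ ls)
    (ht_root : lt ^ 3 - ((n : ℝ) - 3) * lt ^ 2 - ((n : ℝ) + t - 3) * lt - (t : ℝ) ^ 2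
        + ((n : ℝ) + 4) * t - n - 7 = 0)
    (ht_max : ∀ x : ℝ, x ^ 3 - ((n : ℝ) - 3) * x ^ 2 - ((n : ℝ) + t - 3) * x - (t : ℝ) ^ 2
        + ((n : ℝ) + 4) * t - n - 7 = 0 → x ≤ lt) :
    ls < lt :=
  stmt_16_general n s t hs hst htn ls lt hs_root hs_max ht_max
end

section
/- For integers n ≥ 9, if λ₁ > n - 4 is the largest real root of P₂(λ) = λ^4 + (4-n)λ^3 + (8-3n)λ^2 + (3n-10)λ + n - 3, then g_{n,n-2}(λ₁) < 0, where g_{n,n-2}(λ) = λ^3 - (n-3)λ^2 - (2n-5)λ + 2n - 3; consequently the largest root of g_{n,n-2} exceeds λ₁. -/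
/-!
The identity `(λ + 1) g_{n,n-2}(λ) - P₂(λ) = n - 3 (n - 4) λ` is linear in `λ`. At a root
`λ₁ > n - 4` of `P₂` its right-hand side is below `n - 3 (n - 4)²`, which is negative for `n ≥ 6`,
while `λ₁ + 1 > 0`, hence `g_{n,n-2}(λ₁) < 0`. Since `g_{n,n-2}` is a monic cubic, the
intermediate value theorem then yields a root beyond `λ₁`.
-/

open Polynomial Filter

namespace Polynomial

theorem exists_isRoot_gt_of_eval_neg {p : ℝ[X]} (hdeg : 0 < p.degree) (hlc : 0 ≤ p.leadingCoeff)
    {x : ℝ} (hx : p.eval x < 0) : ∃ r, p.IsRoot r ∧ x < r := by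
  obtain ⟨y, hy⟩ :=
    ((p.tendsto_atTop_of_leadingCoeff_nonneg hdeg hlc).eventually_ge_atTop 0).and
      (eventually_ge_atTop x) |>.exists
  obtain ⟨r, hr, hpr⟩ :=
    intermediate_value_Icc hy.2 p.continuous.continuousOn ⟨hx.le, hy.1⟩
  exact ⟨r, hpr, hr.1.lt_of_ne fun h => hx.ne (h ▸ hpr)⟩

end Polynomial

noncomputable def P₂ (n : ℝ) : ℝ[X] :=
  X ^ 4 + C (4 - n) * X ^ 3 + C (8 - 3 * n) * X ^ 2 + C (3 * n - 10) * X + C (n - 3)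

/-- The cubic `g_{n,n-2}` of the paper. -/
noncomputable def g (n : ℝ) : ℝ[X] :=
  X ^ 3 - C (n - 3) * X ^ 2 - C (2 * n - 5) * X + C (2 * n - 3)

theorem eval_P₂ (n x : ℝ) :
    (P₂ n).eval x = x ^ 4 + (4 - n) * x ^ 3 + (8 - 3 * n) * x ^ 2 + (3 * n - 10) * x + n - 3 := by
  simp only [P₂, eval_add, eval_mul, eval_pow, eval_C, eval_X]
  ring

theorem eval_g (n x : ℝ) :
    (g n).eval x = x ^ 3 - (n - 3) * x ^ 2 - (2 * n - 5) * x + 2 * n - 3 := by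
  simp only [g, eval_add, eval_sub, eval_mul, eval_pow, eval_C, eval_X]
  ring

theorem degree_g (n : ℝ) : (g n).degree = 3 := by
  unfold g; compute_degree!

theorem monic_g (n : ℝ) : (g n).Monic := by
  unfold g; monicity!

theorem mul_eval_g_sub_eval_P₂ (n x : ℝ) :
    (x + 1) * (g n).eval x - (P₂ n).eval x = n - 3 * (n - 4) * x := by
  rw [eval_g, eval_P₂]
  ring

theorem eval_g_neg_of_isRoot_P₂ {n x : ℝ} (hn : 6 ≤ n) (hx : n - 4 < x) (hroot : (P₂ n).IsRoot x) :
    (g n).eval x < 0 := by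
  have hprod : (x + 1) * (g n).eval x < 0 := by
    have : (n - 4) * (n - 4) < (n - 4) * x := mul_lt_mul_of_pos_left hx (by linarith)
    nlinarith [mul_eval_g_sub_eval_P₂ n x, hroot.eq_zero]
  exact neg_of_mul_neg_right hprod (by linarith)

theorem stmt_18_general (n : ℤ) (hn : 9 ≤ n) (l1 : ℝ) (hl1 : (n : ℝ) - 4 < l1)
    (hroot : l1 ^ 4 + (4 - (n : ℝ)) * l1 ^ 3 + (8 - 3 * (n : ℝ)) * l1 ^ 2
        + (3 * (n : ℝ) - 10) * l1 + n - 3 = 0) :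
    (l1 ^ 3 - ((n : ℝ) - 3) * l1 ^ 2 - (2 * (n : ℝ) - 5) * l1 + 2 * (n : ℝ) - 3 < 0)
    ∧ ∃ r : ℝ, r ^ 3 - ((n : ℝ) - 3) * r ^ 2 - (2 * (n : ℝ) - 5) * r + 2 * (n : ℝ) - 3 = 0
        ∧ l1 < r := by
  have hn6 : (6 : ℝ) ≤ n := by exact_mod_cast (by omega : (6 : ℤ) ≤ n)
  have hneg := eval_g_neg_of_isRoot_P₂ hn6 hl1 (by rwa [IsRoot, eval_P₂])
  have hdeg : 0 < (g n).degree := by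
    rw [degree_g]
    norm_num
  obtain ⟨r, hr, hlr⟩ :=
    exists_isRoot_gt_of_eval_neg hdeg ((monic_g n).leadingCoeff ▸ zero_le_one) hneg
  rw [eval_g] at hneg
  rw [IsRoot, eval_g] at hr
  exact ⟨hneg, r, hr, hlr⟩

theorem stmt_18 (n : ℤ) (hn : 9 ≤ n) (l1 : ℝ) (hl1 : (n : ℝ) - 4 < l1)
    (hroot : l1 ^ 4 + (4 - (n : ℝ)) * l1 ^ 3 + (8 - 3 * (n : ℝ)) * l1 ^ 2
        + (3 * (n : ℝ) - 10) * l1 + n - 3 = 0)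
    (hmax : ∀ x : ℝ, x ^ 4 + (4 - (n : ℝ)) * x ^ 3 + (8 - 3 * (n : ℝ)) * x ^ 2
        + (3 * (n : ℝ) - 10) * x + n - 3 = 0 → x ≤ l1) :
    (l1 ^ 3 - ((n : ℝ) - 3) * l1 ^ 2 - (2 * (n : ℝ) - 5) * l1 + 2 * (n : ℝ) - 3 < 0)
    ∧ ∃ r : ℝ, r ^ 3 - ((n : ℝ) - 3) * r ^ 2 - (2 * (n : ℝ) - 5) * r + 2 * (n : ℝ) - 3 = 0
        ∧ l1 < r :=
  stmt_18_general n hn l1 hl1 hroot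
end
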